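/- arXiv:math/0701901 — 3 statements merged into one kernel-verified Lean document; each statement's English description precedes it below -/
import Mathlib

section
/- Let 0 < L ≤ K. For every C^1 function u : [0,L] → ℝ with u(0) = 0 and u(L) = K, the deformation energy Ψ(u) = ∫₀ᴸ ((u'(t))² − 1)² dt satisfies Ψ(u) ≥ (K² − L²)²/L³, with equality if and only if u(t) = (K/L)·t for all t. -/
open Set intervalIntegral MeasureTheory

theorem stmt_2 (L K : ℝ) (hL : 0 < L) (hLK : L ≤ K)
    (u u' : ℝ → ℝ)
    (hderiv : ∀ t ∈ Icc (0:ℝ) L, HasDerivAt u (u' t) t)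
    (hcont : ContinuousOn u' (Icc (0:ℝ) L))
    (h0 : u 0 = 0) (hLval : u L = K) :
    (K ^ 2 - L ^ 2) ^ 2 / L ^ 3 ≤ ∫ t in (0:ℝ)..L, ((u' t) ^ 2 - 1) ^ 2 ∧
      ((∫ t in (0:ℝ)..L, ((u' t) ^ 2 - 1) ^ 2) = (K ^ 2 - L ^ 2) ^ 2 / L ^ 3 ↔
        ∀ t ∈ Icc (0:ℝ) L, u t = K / L * t) := by
  have hLne : L ≠ 0 := hL.ne'
  set c : ℝ := K / L with hc_def
  have hKc : c * L = K := by rw [hc_def]; field_simp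
  have hc1 : (1:ℝ) ≤ c := by
    rw [hc_def, le_div_iff₀ hL]; linarith
  have hsub : uIcc (0:ℝ) L = Icc 0 L := uIcc_of_le hL.le
  have hc' : ContinuousOn u' (uIcc (0:ℝ) L) := hsub ▸ hcont
  set g : ℝ → ℝ := fun t => (u' t - c)^2 * ((u' t + c)^2 + (2*c^2 - 2)) with hg_def
  have hgc : ContinuousOn g (uIcc (0:ℝ) L) := by
    apply ContinuousOn.mul
    · exact (hc'.sub continuousOn_const).pow 2
    · exact ((hc'.add continuousOn_const).pow 2).add continuousOn_const
  have intu : IntervalIntegrable u' volume 0 L := hc'.intervalIntegrable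
  have intf : IntervalIntegrable (fun t => ((u' t)^2 - 1)^2) volume 0 L :=
    (((hc'.pow 2).sub continuousOn_const).pow 2).intervalIntegrable
  have intg : IntervalIntegrable g volume 0 L := hgc.intervalIntegrable
  have hftc : (∫ t in (0:ℝ)..L, u' t) = K := by
    rw [intervalIntegral.integral_eq_sub_of_hasDerivAt (fun t ht => hderiv t (hsub ▸ ht)) intu,
      hLval, h0, sub_zero]
  have hlin : (∫ t in (0:ℝ)..L, (u' t - c)) = 0 := by
    rw [intervalIntegral.integral_sub intu intervalIntegrable_const, hftc,
      intervalIntegral.integral_const]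
    simp [smul_eq_mul]
    nlinarith [hKc]
  have hsplit : (∫ t in (0:ℝ)..L, ((u' t)^2 - 1)^2)
      = L * (c^2-1)^2 + ∫ t in (0:ℝ)..L, g t := by
    have h1 : (∫ t in (0:ℝ)..L, ((c^2-1)^2 + 4*c*(c^2-1)*(u' t - c) + g t))
        = L * (c^2-1)^2 + ∫ t in (0:ℝ)..L, g t := by
      rw [intervalIntegral.integral_add (intervalIntegrable_const.add
          ((intu.sub intervalIntegrable_const).const_mul _)) intg,
        intervalIntegral.integral_add intervalIntegrable_const
          ((intu.sub intervalIntegrable_const).const_mul _),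
        intervalIntegral.integral_const_mul, hlin, intervalIntegral.integral_const]
      simp [smul_eq_mul]
    rw [← h1]
    apply intervalIntegral.integral_congr
    intro t ht
    simp only [hg_def]; ring
  have hbound : L * (c^2-1)^2 = (K^2 - L^2)^2 / L^3 := by
    rw [hc_def]; field_simp
  have hgnn : ∀ t ∈ Icc (0:ℝ) L, 0 ≤ g t := by
    intro t ht
    apply mul_nonneg (sq_nonneg _)
    nlinarith [sq_nonneg (u' t + c)]
  have hgint_nn : 0 ≤ ∫ t in (0:ℝ)..L, g t :=
    intervalIntegral.integral_nonneg hL.le (fun t ht => hgnn t ht)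
  refine ⟨by rw [hsplit, ← hbound]; linarith, ?_, ?_⟩
  · intro heq
    have hg0 : (∫ t in (0:ℝ)..L, g t) = 0 := by
      rw [hsplit, ← hbound] at heq; linarith
    have hae : g =ᵐ[volume.restrict (Ioc (0:ℝ) L)] 0 :=
      (intervalIntegral.integral_eq_zero_iff_of_le_of_nonneg_ae hL.le
        (Filter.eventually_of_mem (self_mem_ae_restrict measurableSet_Ioc)
          (fun t ht => hgnn t (Ioc_subset_Icc_self ht))) intg).1 hg0
    have haeIcc : g =ᵐ[volume.restrict (Icc (0:ℝ) L)] 0 := by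
      rwa [Measure.restrict_congr_set Ioc_ae_eq_Icc] at hae
    have hgz : EqOn g 0 (Icc (0:ℝ) L) :=
      Measure.eqOn_Icc_of_ae_eq volume hL.ne haeIcc (hsub ▸ hgc) continuousOn_const
    have hval : ∀ t ∈ Icc (0:ℝ) L, u' t = c ∨ (c = 1 ∧ u' t = -1) := by
      intro t ht
      have h := hgz ht
      simp only [hg_def, Pi.zero_apply] at h
      rcases mul_eq_zero.1 h with h1 | h2
      · left
        have := pow_eq_zero_iff (n := 2) (by norm_num) |>.1 h1
        linarith
      · right
        have h4 : 0 ≤ (u' t + c)^2 := sq_nonneg _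
        have hc1' : c = 1 := by nlinarith
        refine ⟨hc1', ?_⟩
        have h5 : (u' t + c) = 0 := by nlinarith
        linarith [hc1' ▸ h5]
    have hallc : ∀ t ∈ Icc (0:ℝ) L, u' t = c := by
      by_contra hno
      push_neg at hno
      obtain ⟨s, hs, hsne⟩ := hno
      have hc1' : c = 1 := by
        rcases hval s hs with h | h
        · exact absurd h hsne
        · exact h.1
      have hsm : u' s = -1 := by
        rcases hval s hs with h | h
        · exact absurd h hsne
        · exact h.2
      have hallm : ∀ t ∈ Icc (0:ℝ) L, u' t = -1 := by
        intro r hr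
        rcases hval r hr with h | h
        · exfalso
          have hsub2 : uIcc s r ⊆ Icc (0:ℝ) L := by
            rw [← hsub]; exact uIcc_subset_uIcc (hsub ▸ hs) (hsub ▸ hr)
          have h0mem : (0:ℝ) ∈ uIcc (u' s) (u' r) := by
            rw [hsm, h, hc1']
            exact ⟨by norm_num [min_le_iff], by norm_num [le_max_iff]⟩
          obtain ⟨t, htm, ht0⟩ := intermediate_value_uIcc (hcont.mono hsub2) h0mem
          rcases hval t (hsub2 htm) with h' | h' <;> rw [ht0] at h'
          · rw [hc1'] at h'; norm_num at h'
          · have := h'.2; norm_num at this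
        · exact h.2
      have hneg : (∫ t in (0:ℝ)..L, u' t) = -L := by
        rw [intervalIntegral.integral_congr (g := fun _ => (-1:ℝ))
          (fun t ht => hallm t (hsub ▸ ht)), intervalIntegral.integral_const]
        simp
      rw [hftc] at hneg; linarith
    intro t ht
    have hsub3 : uIcc (0:ℝ) t ⊆ Icc (0:ℝ) L := by
      rw [uIcc_of_le ht.1]; exact Icc_subset_Icc le_rfl ht.2
    have hftc2 : (∫ s in (0:ℝ)..t, u' s) = u t := by
      rw [intervalIntegral.integral_eq_sub_of_hasDerivAt (fun s hs => hderiv s (hsub3 hs))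
        ((hcont.mono hsub3).intervalIntegrable), h0, sub_zero]
    have hconst : (∫ s in (0:ℝ)..t, u' s) = c * t := by
      rw [intervalIntegral.integral_congr (g := fun _ => c) (fun s hs => hallc s (hsub3 hs)),
        intervalIntegral.integral_const]
      simp [smul_eq_mul, mul_comm]
    rw [← hftc2, hconst]
  · intro hu
    have hae2 : ∀ᵐ x ∂volume, x ∈ uIoc (0:ℝ) L → ((u' x)^2 - 1)^2 = (c^2-1)^2 := by
      filter_upwards [compl_mem_ae_iff.mpr (Real.volume_singleton (a := L))] with x hx hxI
      rw [uIoc_of_le hL.le] at hxI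
      have hxo : x ∈ Ioo (0:ℝ) L := ⟨hxI.1, lt_of_le_of_ne hxI.2 hx⟩
      have h1 : HasDerivAt u (u' x) x := hderiv x (Ioo_subset_Icc_self hxo)
      have h2 : HasDerivAt u c x := by
        have hd : HasDerivAt (fun s : ℝ => c * s) c x := by
          simpa using (hasDerivAt_id x).const_mul c
        apply hd.congr_of_eventuallyEq
        filter_upwards [Icc_mem_nhds hxo.1 hxo.2] with s hs
        exact hu s hs
      rw [h1.unique h2]
    rw [intervalIntegral.integral_congr_ae hae2, intervalIntegral.integral_const, ← hbound]
    simp [smul_eq_mul]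
end

section
/- Let 0 < L ≤ K. For every C^1 function u : [0,L] → ℝ with u(0) = K and u(L) = 0, one has Ψ(u) = ∫₀ᴸ ((u')² − 1)² dt ≥ (K² − L²)²/L³, and the function w(t) = −(K/L)t + K attains this value. -/
open Set intervalIntegral

lemma cs_aux (L : ℝ) (hL : 0 < L) (f : ℝ → ℝ) (hf : ContinuousOn f (Icc 0 L)) :
    (∫ t in (0:ℝ)..L, f t) ^ 2 ≤ L * ∫ t in (0:ℝ)..L, (f t) ^ 2 := by
  have huIcc : uIcc (0:ℝ) L = Icc 0 L := uIcc_of_le hL.le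
  have hfi : IntervalIntegrable f MeasureTheory.volume 0 L :=
    (hf.mono (le_of_eq huIcc)).intervalIntegrable
  have hf2i : IntervalIntegrable (fun t => (f t) ^ 2) MeasureTheory.volume 0 L :=
    ((hf.pow 2).mono (le_of_eq huIcc)).intervalIntegrable
  set I1 := ∫ t in (0:ℝ)..L, f t with hI1
  set c := I1 / L with hc
  have h0 : (0:ℝ) ≤ ∫ t in (0:ℝ)..L, (f t - c) ^ 2 :=
    intervalIntegral.integral_nonneg hL.le (fun t _ => sq_nonneg _)
  have hexp : (∫ t in (0:ℝ)..L, (f t - c) ^ 2)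
      = (∫ t in (0:ℝ)..L, (f t) ^ 2) - 2 * c * I1 + c ^ 2 * L := by
    have : ∀ t, (f t - c) ^ 2 = (f t) ^ 2 - (2 * c) * f t + c ^ 2 := by
      intro t; ring
    simp_rw [this]
    rw [intervalIntegral.integral_add (hf2i.sub (hfi.const_mul _))
        intervalIntegrable_const,
      intervalIntegral.integral_sub hf2i (hfi.const_mul _),
      intervalIntegral.integral_const_mul, intervalIntegral.integral_const]
    simp [hI1]
    ring
  rw [hexp] at h0
  have hcL : c * L = I1 := by rw [hc]; field_simp
  nlinarith [sq_nonneg c, sq_nonneg (c * L - I1)]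

theorem stmt_4 (L K : ℝ) (hL : 0 < L) (hLK : L ≤ K) :
    (∀ (u u' : ℝ → ℝ),
      (∀ t ∈ Icc (0:ℝ) L, HasDerivAt u (u' t) t) →
      ContinuousOn u' (Icc (0:ℝ) L) →
      u 0 = K → u L = 0 →
      (K ^ 2 - L ^ 2) ^ 2 / L ^ 3 ≤ ∫ t in (0:ℝ)..L, ((u' t) ^ 2 - 1) ^ 2) ∧
    (∫ t in (0:ℝ)..L, ((deriv (fun s : ℝ => -(K / L) * s + K) t) ^ 2 - 1) ^ 2) =
      (K ^ 2 - L ^ 2) ^ 2 / L ^ 3 := by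
  have huIcc : uIcc (0:ℝ) L = Icc 0 L := uIcc_of_le hL.le
  constructor
  · intro u u' hderiv hcont h0 hLval
    have hfi : IntervalIntegrable u' MeasureTheory.volume 0 L :=
      (hcont.mono (le_of_eq huIcc)).intervalIntegrable
    have hI1 : (∫ t in (0:ℝ)..L, u' t) = -K := by
      rw [intervalIntegral.integral_eq_sub_of_hasDerivAt
        (fun t ht => hderiv t (huIcc ▸ ht)) hfi, hLval, h0]
      ring
    -- Cauchy-Schwarz on u'
    have hcs1 : K ^ 2 ≤ L * ∫ t in (0:ℝ)..L, (u' t) ^ 2 := by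
      have := cs_aux L hL u' hcont
      rw [hI1] at this
      nlinarith
    -- g = u'^2 - 1
    have hgcont : ContinuousOn (fun t => (u' t) ^ 2 - 1) (Icc 0 L) :=
      (hcont.pow 2).sub continuousOn_const
    have hcs2 := cs_aux L hL (fun t => (u' t) ^ 2 - 1) hgcont
    have hu2i : IntervalIntegrable (fun t => (u' t) ^ 2) MeasureTheory.volume 0 L :=
      ((hcont.pow 2).mono (le_of_eq huIcc)).intervalIntegrable
    have hsplit : (∫ t in (0:ℝ)..L, ((u' t) ^ 2 - 1))
        = (∫ t in (0:ℝ)..L, (u' t) ^ 2) - L := by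
      rw [intervalIntegral.integral_sub hu2i intervalIntegrable_const,
        intervalIntegral.integral_const]
      simp
    rw [hsplit] at hcs2
    set I2 := ∫ t in (0:ℝ)..L, (u' t) ^ 2 with hI2d
    set J := ∫ t in (0:ℝ)..L, ((u' t) ^ 2 - 1) ^ 2 with hJd
    -- I2 - L ≥ K^2/L - L ≥ 0, so (I2 - L)^2 ≥ (K^2/L - L)^2
    have hI2L : K ^ 2 / L ≤ I2 := by
      rw [div_le_iff₀ hL]
      nlinarith
    have hnn : 0 ≤ I2 - L := by
      have : L ≤ K ^ 2 / L := by
        rw [le_div_iff₀ hL]; nlinarith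
      linarith
    have hsq : (K ^ 2 / L - L) ^ 2 ≤ (I2 - L) ^ 2 := by
      have h1 : 0 ≤ K ^ 2 / L - L := by
        have : L ≤ K ^ 2 / L := by rw [le_div_iff₀ hL]; nlinarith
        linarith
      nlinarith
    have hfin : (K ^ 2 / L - L) ^ 2 ≤ L * J := le_trans hsq hcs2
    rw [div_le_iff₀ (by positivity : (0:ℝ) < L ^ 3)]
    have hLne : L ≠ 0 := hL.ne'
    have h2 : (K ^ 2 / L - L) ^ 2 * L ^ 2 ≤ L * J * L ^ 2 :=
      mul_le_mul_of_nonneg_right hfin (sq_nonneg L)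
    have h3 : (K ^ 2 / L - L) ^ 2 * L ^ 2 = (K ^ 2 - L ^ 2) ^ 2 := by
      field_simp
    nlinarith
  · have hd : ∀ t : ℝ, deriv (fun s : ℝ => -(K / L) * s + K) t = -(K / L) := by
      intro t
      have : HasDerivAt (fun s : ℝ => -(K / L) * s + K) (-(K / L)) t := by
        simpa using ((hasDerivAt_id t).const_mul (-(K / L))).add_const K
      exact this.deriv
    simp_rw [hd]
    rw [intervalIntegral.integral_const]
    have hLne : L ≠ 0 := hL.ne'
    field_simp
    rw [smul_eq_mul, sub_zero]
    field_simp
end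

section
/- Let 0 < L ≤ K. If u : [0,L] → ℝ is C¹ with u(0) = 0, u(L) = K and Ψ(u) = ∫₀ᴸ (u'² − 1)² dt = (K² − L²)²/L³, then u'(t) = K/L for all t ∈ [0,L]. -/
/-!
Writing `A = ∫ u'²` and `c = K / L`, the bias–variance identity
`∫ (f - m)² = ∫ (f - mean f)² + L (mean f - m)²` gives both Cauchy–Schwarz steps with their defects:
`A = K² / L + ∫ (u' - c)²` (as `∫ u' = K`), and `Ψ(u) = ∫ (u'² - A / L)² + (A - L)² / L`.
Since `A - L ≥ K² / L - L ≥ 0`, the value `Ψ(u) = (K² / L - L)² / L` forces `∫ (u' - c)² = 0`,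
and a continuous `u'` with this property is constantly `c`.
-/

open Set intervalIntegral MeasureTheory

namespace intervalIntegral

variable {f : ℝ → ℝ} {a b : ℝ}

theorem integral_sub_const_sq (hf : IntervalIntegrable f volume a b)
    (hf2 : IntervalIntegrable (fun x => f x ^ 2) volume a b) (m : ℝ) :
    ∫ x in a..b, (f x - m) ^ 2 =
      (∫ x in a..b, f x ^ 2) - 2 * m * (∫ x in a..b, f x) + (b - a) * m ^ 2 := by
  have hexpand : (fun x => (f x - m) ^ 2) = fun x => f x ^ 2 - 2 * m * f x + m ^ 2 := by
    ext x; ring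
  rw [hexpand, integral_add (hf2.sub (hf.const_mul _)) intervalIntegrable_const,
    integral_sub hf2 (hf.const_mul _), integral_const_mul, integral_const, smul_eq_mul]

theorem integral_sub_sq_eq_integral_sub_mean_sq_add (hab : a ≠ b)
    (hf : IntervalIntegrable f volume a b)
    (hf2 : IntervalIntegrable (fun x => f x ^ 2) volume a b) (m : ℝ) :
    ∫ x in a..b, (f x - m) ^ 2 =
      (∫ x in a..b, (f x - (∫ y in a..b, f y) / (b - a)) ^ 2) +
        (b - a) * ((∫ y in a..b, f y) / (b - a) - m) ^ 2 := by
  rw [integral_sub_const_sq hf hf2, integral_sub_const_sq hf hf2]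
  field_simp [sub_ne_zero.2 hab.symm]
  ring

theorem eq_of_integral_sub_sq_eq_zero (hab : a < b) (hf : ContinuousOn f (Icc a b)) {m : ℝ}
    (h : ∫ x in a..b, (f x - m) ^ 2 = 0) : ∀ x ∈ Icc a b, f x = m := by
  intro x hx
  by_contra hne
  have hpos : 0 < ∫ x in a..b, (f x - m) ^ 2 :=
    integral_pos hab (by fun_prop) (fun _ _ => sq_nonneg _)
      ⟨x, hx, sq_pos_of_ne_zero (sub_ne_zero.2 hne)⟩
  exact hpos.ne' h

end intervalIntegral

theorem stmt_17 (L K : ℝ) (hL : 0 < L) (hLK : L ≤ K)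
    (u u' : ℝ → ℝ)
    (hderiv : ∀ t ∈ Icc (0:ℝ) L, HasDerivAt u (u' t) t)
    (hcont : ContinuousOn u' (Icc (0:ℝ) L))
    (h0 : u 0 = 0) (hLval : u L = K)
    (heq : (∫ t in (0:ℝ)..L, ((u' t) ^ 2 - 1) ^ 2) =
      (K ^ 2 - L ^ 2) ^ 2 / L ^ 3) :
    ∀ t ∈ Icc (0:ℝ) L, u' t = K / L := by
  have hI : uIcc 0 L = Icc 0 L := uIcc_of_le hL.le
  have hc : ContinuousOn u' (uIcc 0 L) := hI ▸ hcont
  have hc2 : ContinuousOn (fun t => u' t ^ 2) (uIcc 0 L) := hc.pow 2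
  have hK : ∫ t in (0:ℝ)..L, u' t = K := by
    rw [integral_eq_sub_of_hasDerivAt (fun t ht => hderiv t (hI ▸ ht)) hc.intervalIntegrable,
      h0, hLval, sub_zero]
  have hA := integral_sub_sq_eq_integral_sub_mean_sq_add hL.ne hc.intervalIntegrable
    hc2.intervalIntegrable 0
  have hΨ := integral_sub_sq_eq_integral_sub_mean_sq_add hL.ne hc2.intervalIntegrable
    (hc2.pow 2).intervalIntegrable 1
  simp only [sub_zero, hK] at hA hΨ
  rw [heq] at hΨ
  set A := ∫ t in (0:ℝ)..L, u' t ^ 2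
  set D := ∫ t in (0:ℝ)..L, (u' t - K / L) ^ 2
  set E := ∫ t in (0:ℝ)..L, (u' t ^ 2 - A / L) ^ 2
  have hD0 : 0 ≤ D := integral_nonneg hL.le fun _ _ => sq_nonneg _
  have hE0 : 0 ≤ E := integral_nonneg hL.le fun _ _ => sq_nonneg _
  have hD : D = 0 := by
    field_simp at hA hΨ
    have hdefect : L ^ 3 * E + (D * L) ^ 2 + 2 * (D * L) * (K ^ 2 - L ^ 2) = 0 := by
      linear_combination (-1 : ℝ) * hΨ - (A * L + D * L - 2 * L ^ 2 + K ^ 2) * hA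
    have hKL : 0 ≤ K ^ 2 - L ^ 2 := by nlinarith
    have hDL : (D * L) ^ 2 = 0 := by
      linarith [mul_nonneg (pow_nonneg hL.le 3) hE0, mul_nonneg (mul_nonneg hD0 hL.le) hKL,
        sq_nonneg (D * L)]
    exact (mul_eq_zero.1 (pow_eq_zero_iff two_ne_zero |>.1 hDL)).resolve_right hL.ne'
  exact eq_of_integral_sub_sq_eq_zero hL hcont hD
end
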